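/- In SP_9, for every positive edge uv there exist exactly two vertices z such that both uz and vz are negative. -/

import Mathlib

/-- Vertices of `SP_9`, identified with `{0,1,2} × {0,1,2}`. -/
abbrev V9 : Type := Fin 3 × Fin 3

/-- The edge `uv` of `SP_9` is positive: `u ≠ v` and they agree in exactly one coordinate. -/
abbrev pos9 (u v : V9) : Prop :=
  (u.1 = v.1 ∧ u.2 ≠ v.2) ∨ (u.1 ≠ v.1 ∧ u.2 = v.2)

/-- The edge `uv` of `SP_9` is negative: `u ≠ v` and it is not positive. -/
abbrev neg9 (u v : V9) : Prop := u ≠ v ∧ ¬ pos9 u v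


/-
An edge `uz` is negative exactly when `u` and `z` differ in both coordinates, so the
common negative neighbours of `u` and `v` form the product of the complements of `{u.1, v.1}` and
`{u.2, v.2}`. For a positive edge one of these sets has one element and the other two, so in
`Fin 3` the two complements have sizes `2` and `1`.
-/

open Finset

theorem neg9_iff {u z : V9} : neg9 u z ↔ u.1 ≠ z.1 ∧ u.2 ≠ z.2 := by
  rw [neg9, pos9, Ne, Prod.ext_iff]
  tauto

theorem card_filter_fst_notMem_snd_notMem {α β : Type*} [Fintype α] [Fintype β]
    [DecidableEq α] [DecidableEq β] (s : Finset α) (t : Finset β) :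
    #{z : α × β | z.1 ∉ s ∧ z.2 ∉ t} =
      (Fintype.card α - #s) * (Fintype.card β - #t) := by
  rw [← card_compl, ← card_compl, ← card_product]
  congr 1
  ext z
  simp

theorem sp9_pos_edge_two_common_neg :
    ∀ u v : V9, pos9 u v →
      (Finset.univ.filter (fun z : V9 => neg9 u z ∧ neg9 v z)).card = 2 := by
  intro u v huv
  have common_neg : univ.filter (fun z : V9 => neg9 u z ∧ neg9 v z) =
      univ.filter fun z : V9 =>
        z.1 ∉ ({u.1, v.1} : Finset (Fin 3)) ∧ z.2 ∉ ({u.2, v.2} : Finset (Fin 3)) := by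
    ext z
    simp only [neg9_iff, mem_filter, mem_univ, true_and, mem_insert, mem_singleton]
    tauto
  rw [common_neg, card_filter_fst_notMem_snd_notMem]
  rcases huv with ⟨h1, h2⟩ | ⟨h1, h2⟩ <;> simp [h1, h2]
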